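/- Suppose the infimum of C(T) = ∫ ‖x − T(x)‖^p dα over transport maps T with T_♯α ∈ ⋃_F S_{F,L} is finite, the class of classifiers is compact, L is continuous, and bounded subsets of ⋃_F S_{F,L} (in W_p) are totally bounded. Assume moreover that for every target measure β in the W_p-closure of ⋃_F S_{F,L} there exists an optimal transport map from α to β whose cost equals W_p(α,β)^p. Then the infimum is attained: there exist T* and F* with T*_♯α ∈ S_{F*,L} and C(T*) equal to the infimum, and T* is an optimal transport map between α and T*_♯α. -/

import Mathlib

/-! Take a minimizing sequence `Tₙ` with classifiers `Fₙ`. The measures `Tₙ♯α` stay at bounded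
`W_p`-distance from `α`, so a subsequence converges to some `β`, and by compactness of the
classifiers `Fₙ → F*` along a further subsequence; continuity of `L` gives `L(F*, β) = 0`.
An optimal map `T*` to `β` is then admissible, while the triangle inequality for `W_p` (proved
by gluing couplings along a disintegration) yields `C(T*) = W_p^p(α, β) ≤ lim C(Tₙ) = m`. -/

open MeasureTheory Filter
open scoped ENNReal

/-- `W_p(α,β)^p`: infimum of `∫ ‖x - y‖^p dγ` over couplings `γ` of `α` and `β`. -/
noncomputable def WassersteinPow {d : ℕ} (p : ℝ)
    (α β : Measure (EuclideanSpace ℝ (Fin d))) : ℝ≥0∞ :=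
  ⨅ (γ : Measure (EuclideanSpace ℝ (Fin d) × EuclideanSpace ℝ (Fin d)))
    (_ : γ.map Prod.fst = α ∧ γ.map Prod.snd = β),
      ∫⁻ z, ENNReal.ofReal (‖z.1 - z.2‖ ^ p) ∂γ

open ProbabilityTheory
open scoped Topology

lemma ENNReal.exists_seq_tendsto_biInf {ι : Type*} {P : ι → Prop} {f : ι → ℝ≥0∞}
    (h : ⨅ i, ⨅ (_ : P i), f i < ⊤) :
    ∃ x : ℕ → ι, (∀ n, P (x n)) ∧ (∀ n, f (x n) ≤ (⨅ i, ⨅ (_ : P i), f i) + 1) ∧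
      Tendsto (fun n => f (x n)) atTop (𝓝 (⨅ i, ⨅ (_ : P i), f i)) := by
  set m := ⨅ i, ⨅ (_ : P i), f i
  have hlt : ∀ n : ℕ, m < m + ((n : ℝ≥0∞) + 1)⁻¹ := fun n =>
    ENNReal.lt_add_right h.ne (by simp)
  have hex : ∀ n : ℕ, ∃ i, P i ∧ f i < m + ((n : ℝ≥0∞) + 1)⁻¹ := fun n => by
    obtain ⟨i, hi⟩ := iInf_lt_iff.1 (hlt n)
    obtain ⟨hPi, hfi⟩ := iInf_lt_iff.1 hi
    exact ⟨i, hPi, hfi⟩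
  choose x hxP hx using hex
  have hε : Tendsto (fun n : ℕ => ((n : ℝ≥0∞) + 1)⁻¹) atTop (𝓝 0) := by
    simpa [Function.comp_def] using
      ENNReal.tendsto_inv_nat_nhds_zero.comp (tendsto_add_atTop_nat 1)
  refine ⟨x, hxP, fun n => (hx n).le.trans ?_, ?_⟩
  · gcongr
    exact ENNReal.inv_le_one.2 le_add_self
  · refine tendsto_of_tendsto_of_tendsto_of_le_of_le tendsto_const_nhds
      (by simpa using tendsto_const_nhds.add hε) (fun n => iInf₂_le (x n) (hxP n))
      (fun n => (hx n).le)

section Gluing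

variable {X Y Z : Type*} [MeasurableSpace X] [MeasurableSpace Y] [MeasurableSpace Z]

lemma MeasureTheory.Measure.map_compProd_prodMkLeft (γ : Measure (X × Y)) [SFinite γ]
    (κ : Kernel Y Z) [IsSFiniteKernel κ] :
    (γ ⊗ₘ κ.prodMkLeft X).map (fun q => (q.1.2, q.2)) = γ.map Prod.snd ⊗ₘ κ := by
  have hf : Measurable fun q : (X × Y) × Z => (q.1.2, q.2) :=
    measurable_fst.snd.prodMk measurable_snd
  ext s hs
  rw [Measure.map_apply hf hs, Measure.compProd_apply (hf hs), Measure.compProd_apply hs,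
    lintegral_map (Kernel.measurable_kernel_prodMk_left hs) measurable_snd]
  rfl

lemma MeasureTheory.Measure.exists_gluing [StandardBorelSpace Z] [Nonempty Z]
    (γ₁ : Measure (X × Y)) [SFinite γ₁] (γ₂ : Measure (Y × Z)) [IsFiniteMeasure γ₂]
    (h : γ₁.map Prod.snd = γ₂.map Prod.fst) :
    ∃ η : Measure ((X × Y) × Z), η.map Prod.fst = γ₁ ∧ η.map (fun q => (q.1.2, q.2)) = γ₂ :=
  ⟨γ₁ ⊗ₘ γ₂.condKernel.prodMkLeft X, Measure.fst_compProd _ _, by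
    rw [map_compProd_prodMkLeft, h]
    exact γ₂.disintegrate γ₂.condKernel⟩

end Gluing

section CouplingCost

variable {V : Type*} [NormedAddCommGroup V] [MeasurableSpace V] [BorelSpace V]
  [SecondCountableTopology V] {p : ℝ}

noncomputable def couplingCost (p : ℝ) (γ : Measure (V × V)) : ℝ≥0∞ :=
  ∫⁻ z, ENNReal.ofReal (‖z.1 - z.2‖ ^ p) ∂γ

lemma measurable_ofReal_norm_sub_rpow (p : ℝ) :
    Measurable fun z : V × V => ENNReal.ofReal (‖z.1 - z.2‖ ^ p) :=
  ((measurable_fst.sub measurable_snd).norm.pow_const p).ennreal_ofReal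

lemma couplingCost_map_graph (α : Measure V) {T : V → V} (hT : Measurable T) :
    couplingCost p (α.map fun x => (x, T x)) = ∫⁻ x, ENNReal.ofReal (‖x - T x‖ ^ p) ∂α :=
  lintegral_map (measurable_ofReal_norm_sub_rpow p) (measurable_id.prodMk hT)

lemma couplingCost_map_rpow_le_add (hp : 1 ≤ p) (η : Measure ((V × V) × V)) :
    couplingCost p (η.map fun q => (q.1.1, q.2)) ^ (1 / p) ≤
      couplingCost p (η.map Prod.fst) ^ (1 / p) +
        couplingCost p (η.map fun q => (q.1.2, q.2)) ^ (1 / p) := by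
  have hp0 : 0 ≤ p := zero_le_one.trans hp
  set A : (V × V) × V → ℝ≥0∞ := fun q => ENNReal.ofReal ‖q.1.1 - q.1.2‖
  set B : (V × V) × V → ℝ≥0∞ := fun q => ENNReal.ofReal ‖q.1.2 - q.2‖
  have hA : Measurable A := (measurable_fst.fst.sub measurable_fst.snd).norm.ennreal_ofReal
  have hB : Measurable B := (measurable_fst.snd.sub measurable_snd).norm.ennreal_ofReal
  have hcost : ∀ {f : (V × V) × V → V × V}, Measurable f →
      couplingCost p (η.map f) = ∫⁻ q, ENNReal.ofReal ‖(f q).1 - (f q).2‖ ^ p ∂η := by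
    intro f hf
    rw [couplingCost, lintegral_map (measurable_ofReal_norm_sub_rpow p) hf]
    simp only [ENNReal.ofReal_rpow_of_nonneg (norm_nonneg _) hp0]
  rw [hcost (measurable_fst.fst.prodMk measurable_snd), hcost measurable_fst,
    hcost (measurable_fst.snd.prodMk measurable_snd)]
  refine le_trans ?_ (ENNReal.lintegral_Lp_add_le hA.aemeasurable hB.aemeasurable hp)
  gcongr with q
  rw [Pi.add_apply, ← ENNReal.ofReal_add (norm_nonneg _) (norm_nonneg _)]
  exact ENNReal.ofReal_le_ofReal (norm_sub_le_norm_sub_add_norm_sub _ _ _)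

end CouplingCost

section Wasserstein

variable {d : ℕ} {p : ℝ}

local notation "E" => EuclideanSpace ℝ (Fin d)

lemma wassersteinPow_le_couplingCost {α β : Measure E} {γ : Measure (E × E)}
    (h₁ : γ.map Prod.fst = α) (h₂ : γ.map Prod.snd = β) :
    WassersteinPow p α β ≤ couplingCost p γ :=
  iInf₂_le γ ⟨h₁, h₂⟩

lemma wassersteinPow_map_le (α : Measure E) {T : E → E} (hT : Measurable T) :
    WassersteinPow p α (α.map T) ≤ ∫⁻ x, ENNReal.ofReal (‖x - T x‖ ^ p) ∂α := by
  have hg : Measurable fun x => (x, T x) := measurable_id.prodMk hT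
  rw [← couplingCost_map_graph α hT]
  refine wassersteinPow_le_couplingCost ?_ ?_
  · rw [Measure.map_map measurable_fst hg]
    exact Measure.map_id
  · rw [Measure.map_map measurable_snd hg]
    rfl

lemma wassersteinPow_rpow {q : ℝ} (hq : 0 < q) (α β : Measure E) :
    WassersteinPow p α β ^ q =
      ⨅ (γ : Measure (E × E)) (_ : γ.map Prod.fst = α ∧ γ.map Prod.snd = β),
        couplingCost p γ ^ q := by
  have hrpow : ∀ x : ℝ≥0∞, x ^ q = ENNReal.orderIsoRpow q hq x := fun _ => rfl
  simp only [WassersteinPow, couplingCost, hrpow, OrderIso.map_iInf]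

lemma wassersteinPow_rpow_le_add (hp : 1 ≤ p) (α μ β : Measure E) [IsFiniteMeasure α] :
    WassersteinPow p α β ^ (1 / p) ≤
      WassersteinPow p α μ ^ (1 / p) + WassersteinPow p μ β ^ (1 / p) := by
  have hp0 : 0 < 1 / p := one_div_pos.2 (zero_lt_one.trans_le hp)
  conv_rhs => rw [wassersteinPow_rpow hp0, wassersteinPow_rpow hp0]
  refine ENNReal.le_iInf₂_add_iInf₂ fun γ₁ ⟨h₁f, h₁s⟩ γ₂ ⟨h₂f, h₂s⟩ => ?_
  have : IsFiniteMeasure (γ₁.map Prod.fst) := h₁f ▸ inferInstance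
  have : IsFiniteMeasure γ₁ := Measure.isFiniteMeasure_of_map measurable_fst.aemeasurable
  have : IsFiniteMeasure (γ₂.map Prod.fst) := h₂f ▸ h₁s ▸ inferInstance
  have : IsFiniteMeasure γ₂ := Measure.isFiniteMeasure_of_map measurable_fst.aemeasurable
  obtain ⟨η, hη₁, hη₂⟩ := Measure.exists_gluing γ₁ γ₂ (h₁s.trans h₂f.symm)
  have hg : Measurable fun q : (E × E) × E => (q.1.1, q.2) :=
    measurable_fst.fst.prodMk measurable_snd
  have hgf : (η.map fun q => (q.1.1, q.2)).map Prod.fst = α := by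
    rw [Measure.map_map measurable_fst hg, ← h₁f, ← hη₁,
      Measure.map_map measurable_fst measurable_fst]
    rfl
  have hgs : (η.map fun q => (q.1.1, q.2)).map Prod.snd = β := by
    rw [Measure.map_map measurable_snd hg, ← h₂s, ← hη₂,
      Measure.map_map measurable_snd (measurable_fst.snd.prodMk measurable_snd)]
    rfl
  calc _ ≤ couplingCost p (η.map fun q => (q.1.1, q.2)) ^ (1 / p) :=
        ENNReal.rpow_le_rpow (wassersteinPow_le_couplingCost hgf hgs) hp0.le
    _ ≤ _ := by
        simpa only [hη₁, hη₂] using couplingCost_map_rpow_le_add hp η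

lemma wassersteinPow_le_of_tendsto (hp : 1 ≤ p) {α β : Measure E} [IsFiniteMeasure α]
    {βs : ℕ → Measure E} (hβ : Tendsto (fun n => WassersteinPow p (βs n) β) atTop (𝓝 0))
    {c : ℕ → ℝ≥0∞} {c₀ : ℝ≥0∞} (hc : ∀ n, WassersteinPow p α (βs n) ≤ c n)
    (hc₀ : Tendsto c atTop (𝓝 c₀)) :
    WassersteinPow p α β ≤ c₀ := by
  have hp0 : 0 < 1 / p := one_div_pos.2 (zero_lt_one.trans_le hp)
  rw [← ENNReal.rpow_le_rpow_iff hp0]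
  have hlim : Tendsto (fun n => c n ^ (1 / p) + WassersteinPow p (βs n) β ^ (1 / p)) atTop
      (𝓝 (c₀ ^ (1 / p) + 0 ^ (1 / p))) :=
    ((ENNReal.continuous_rpow_const.tendsto _).comp hc₀).add
      ((ENNReal.continuous_rpow_const.tendsto _).comp hβ)
  rw [ENNReal.zero_rpow_of_pos hp0, add_zero] at hlim
  refine ge_of_tendsto' hlim fun n => (wassersteinPow_rpow_le_add hp α (βs n) β).trans ?_
  gcongr
  exact hc n

end Wasserstein

theorem stmt_3_general {d : ℕ} (p : ℝ) (hp : 1 < p)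
    (α : Measure (EuclideanSpace ℝ (Fin d))) [IsProbabilityMeasure α]
    {𝓕 : Type*} [MetricSpace 𝓕] [CompactSpace 𝓕]
    (L : 𝓕 → Measure (EuclideanSpace ℝ (Fin d)) → ℝ)
    -- continuity of `L`, jointly in the classifier and (sequentially, w.r.t. `W_p`)
    -- in the measure:
    (hLcont : ∀ (Fi : ℕ → 𝓕) (F : 𝓕) (βi : ℕ → Measure (EuclideanSpace ℝ (Fin d)))
      (β : Measure (EuclideanSpace ℝ (Fin d))),
      Tendsto Fi atTop (nhds F) →
      Tendsto (fun i => WassersteinPow p (βi i) β) atTop (nhds 0) →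
      Tendsto (fun i => L (Fi i) (βi i)) atTop (nhds (L F β)))
    (m : ℝ≥0∞)
    (hm : m = ⨅ (T : EuclideanSpace ℝ (Fin d) → EuclideanSpace ℝ (Fin d))
      (_ : Measurable T ∧ ∃ F, L F (α.map T) = 0),
        ∫⁻ x, ENNReal.ofReal (‖x - T x‖ ^ p) ∂α)
    (hfin : m < ⊤)
    -- bounded subsets of `⋃_F S_{F,L}` are totally bounded (sequential form):
    (htb : ∀ (βi : ℕ → Measure (EuclideanSpace ℝ (Fin d))) (Fi : ℕ → 𝓕),
      (∀ i, L (Fi i) (βi i) = 0) →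
      (∃ M : ℝ≥0∞, M < ⊤ ∧ ∀ i, WassersteinPow p α (βi i) ≤ M) →
      ∃ (φ : ℕ → ℕ) (β : Measure (EuclideanSpace ℝ (Fin d))), StrictMono φ ∧
        Tendsto (fun i => WassersteinPow p (βi (φ i)) β) atTop (nhds 0))
    -- existence of optimal transport maps towards the `W_p`-closure of `⋃_F S_{F,L}`:
    (hot : ∀ β : Measure (EuclideanSpace ℝ (Fin d)),
      (∃ (βi : ℕ → Measure (EuclideanSpace ℝ (Fin d))) (Fi : ℕ → 𝓕),
        (∀ i, L (Fi i) (βi i) = 0) ∧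
        Tendsto (fun i => WassersteinPow p (βi i) β) atTop (nhds 0)) →
      ∃ T : EuclideanSpace ℝ (Fin d) → EuclideanSpace ℝ (Fin d),
        Measurable T ∧ α.map T = β ∧
        (∫⁻ x, ENNReal.ofReal (‖x - T x‖ ^ p) ∂α) = WassersteinPow p α β) :
    ∃ (Tstar : EuclideanSpace ℝ (Fin d) → EuclideanSpace ℝ (Fin d)) (Fstar : 𝓕),
      Measurable Tstar ∧ L Fstar (α.map Tstar) = 0 ∧
      (∫⁻ x, ENNReal.ofReal (‖x - Tstar x‖ ^ p) ∂α) = m ∧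
      (∫⁻ x, ENNReal.ofReal (‖x - Tstar x‖ ^ p) ∂α) =
        WassersteinPow p α (α.map Tstar) := by
  obtain ⟨T, hT, hTbound, hTlim⟩ := ENNReal.exists_seq_tendsto_biInf (hm ▸ hfin)
  rw [← hm] at hTbound hTlim
  choose hTm F hLF using hT
  obtain ⟨φ, β, hφ, hβ⟩ := htb (fun n => α.map (T n)) F hLF
    ⟨m + 1, ENNReal.add_lt_top.2 ⟨hfin, ENNReal.one_lt_top⟩,
      fun n => (wassersteinPow_map_le α (hTm n)).trans (hTbound n)⟩
  obtain ⟨Fstar, -, ψ, hψ, hF⟩ :=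
    isCompact_univ.tendsto_subseq (x := fun n => F (φ n)) fun _ => Set.mem_univ _
  have hβψ := hβ.comp hψ.tendsto_atTop
  have hLβ : L Fstar β = 0 :=
    tendsto_nhds_unique (hLcont _ _ _ _ hF hβψ) (tendsto_const_nhds.congr fun n => (hLF _).symm)
  obtain ⟨Tstar, hTstar, rfl, hopt⟩ := hot β ⟨_, _, fun n => hLF (φ (ψ n)), hβψ⟩
  have hle : WassersteinPow p α (α.map Tstar) ≤ m :=
    wassersteinPow_le_of_tendsto hp.le hβψ (fun n => wassersteinPow_map_le α (hTm _))
      (hTlim.comp (hφ.comp hψ).tendsto_atTop)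
  have hge : m ≤ ∫⁻ x, ENNReal.ofReal (‖x - Tstar x‖ ^ p) ∂α :=
    hm ▸ iInf₂_le Tstar ⟨hTstar, Fstar, hLβ⟩
  exact ⟨Tstar, Fstar, hTstar, hLβ, le_antisymm (hopt ▸ hle) hge, hopt⟩

/-- Existence of a minimizer for the least-action training problem: under the stated
compactness, continuity, total-boundedness and optimal-transport hypotheses, the
infimum of the transport cost over admissible `(T, F)` is attained, and the minimizer
`T*` is an optimal transport map between `α` and `T*_♯α`. -/
theorem stmt_3 {d : ℕ} (p : ℝ) (hp : 1 < p)
    (α : Measure (EuclideanSpace ℝ (Fin d))) [IsProbabilityMeasure α]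
    (hac : α ≪ volume)
    {𝓕 : Type*} [MetricSpace 𝓕] [CompactSpace 𝓕]
    (L : 𝓕 → Measure (EuclideanSpace ℝ (Fin d)) → ℝ)
    -- continuity of `L`, jointly in the classifier and (sequentially, w.r.t. `W_p`)
    -- in the measure:
    (hLcont : ∀ (Fi : ℕ → 𝓕) (F : 𝓕) (βi : ℕ → Measure (EuclideanSpace ℝ (Fin d)))
      (β : Measure (EuclideanSpace ℝ (Fin d))),
      Tendsto Fi atTop (nhds F) →
      Tendsto (fun i => WassersteinPow p (βi i) β) atTop (nhds 0) →
      Tendsto (fun i => L (Fi i) (βi i)) atTop (nhds (L F β)))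
    (m : ℝ≥0∞)
    (hm : m = ⨅ (T : EuclideanSpace ℝ (Fin d) → EuclideanSpace ℝ (Fin d))
      (_ : Measurable T ∧ ∃ F, L F (α.map T) = 0),
        ∫⁻ x, ENNReal.ofReal (‖x - T x‖ ^ p) ∂α)
    (hfin : m < ⊤)
    -- bounded subsets of `⋃_F S_{F,L}` are totally bounded (sequential form):
    (htb : ∀ (βi : ℕ → Measure (EuclideanSpace ℝ (Fin d))) (Fi : ℕ → 𝓕),
      (∀ i, L (Fi i) (βi i) = 0) →
      (∃ M : ℝ≥0∞, M < ⊤ ∧ ∀ i, WassersteinPow p α (βi i) ≤ M) →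
      ∃ (φ : ℕ → ℕ) (β : Measure (EuclideanSpace ℝ (Fin d))), StrictMono φ ∧
        Tendsto (fun i => WassersteinPow p (βi (φ i)) β) atTop (nhds 0))
    -- existence of optimal transport maps towards the `W_p`-closure of `⋃_F S_{F,L}`:
    (hot : ∀ β : Measure (EuclideanSpace ℝ (Fin d)),
      (∃ (βi : ℕ → Measure (EuclideanSpace ℝ (Fin d))) (Fi : ℕ → 𝓕),
        (∀ i, L (Fi i) (βi i) = 0) ∧
        Tendsto (fun i => WassersteinPow p (βi i) β) atTop (nhds 0)) →
      ∃ T : EuclideanSpace ℝ (Fin d) → EuclideanSpace ℝ (Fin d),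
        Measurable T ∧ α.map T = β ∧
        (∫⁻ x, ENNReal.ofReal (‖x - T x‖ ^ p) ∂α) = WassersteinPow p α β) :
    ∃ (Tstar : EuclideanSpace ℝ (Fin d) → EuclideanSpace ℝ (Fin d)) (Fstar : 𝓕),
      Measurable Tstar ∧ L Fstar (α.map Tstar) = 0 ∧
      (∫⁻ x, ENNReal.ofReal (‖x - Tstar x‖ ^ p) ∂α) = m ∧
      (∫⁻ x, ENNReal.ofReal (‖x - Tstar x‖ ^ p) ∂α) =
        WassersteinPow p α (α.map Tstar) :=
  stmt_3_general p hp α L hLcont m hm hfin htb hot
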